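/- arXiv:2402.15899 — 2 statements merged into one kernel-verified Lean document; each statement's English description precedes it below -/
import Mathlib

section
/- Let X be a Baire topological space and let A ⊆ X. Then A is Baire measurable if and only if for every nonempty open set U ⊆ X, either A is comeager in U, or there exists a nonempty open set V ⊆ U such that A is meager in V. -/
open MeasureTheory Topology Set

lemma myNdMono {X : Type*} [TopologicalSpace X] {s t : Set X}
    (h : IsNowhereDense s) (hts : t ⊆ s) : IsNowhereDense t := by
  rw [IsNowhereDense, ← subset_empty_iff, ← h]
  exact interior_mono (closure_mono hts)

lemma myNdMeagre {X : Type*} [TopologicalSpace X] {s : Set X}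
    (h : IsNowhereDense s) : IsMeagre s :=
  isMeagre_iff_countable_union_isNowhereDense.mpr
    ⟨{s}, by simpa, countable_singleton s, by simp⟩

lemma myMeagreUnion {X : Type*} [TopologicalSpace X] {s t : Set X}
    (hs : IsMeagre s) (ht : IsMeagre t) : IsMeagre (s ∪ t) := by
  rw [IsMeagre, compl_union]; exact Filter.inter_mem hs ht

/-- `closure S \ S` is nowhere dense for `S` open. -/
lemma myNd_closure_diff {X : Type*} [TopologicalSpace X] {S : Set X} (hS : IsOpen S) :
    IsNowhereDense (closure S \ S) := by
  have h1 : closure S \ S = frontier S := by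
    rw [frontier_eq_closure_inter_closure, hS.isClosed_compl.closure_eq, diff_eq]
  rw [h1]
  have : IsClosed (frontier S) := isClosed_frontier
  rw [this.isNowhereDense_iff, ← frontier_compl]
  exact interior_frontier hS.isClosed_compl

/-- If a nonempty open set is contained in the closure of `s`, then it meets `s`. -/
lemma myOpen_meets {X : Type*} [TopologicalSpace X] {O s : Set X} (hO : IsOpen O)
    (hne : O.Nonempty) (hsub : O ⊆ closure s) : (O ∩ s).Nonempty := by
  by_contra h
  rw [not_nonempty_iff_eq_empty] at h
  obtain ⟨x, hx⟩ := hne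
  have : x ∈ closure (O ∩ s) := hO.inter_closure ⟨hx, hsub hx⟩
  rw [h, closure_empty] at this
  exact this

/-- **Banach category theorem**: if `B` is meager in each member of an arbitrary
family of open sets, then it is meager in the union. -/
lemma myBanach_category {X : Type*} [TopologicalSpace X] (B : Set X) (S : Set (Set X))
    (ho : ∀ V ∈ S, IsOpen V) (hm : ∀ V ∈ S, IsMeagre (B ∩ V)) :
    IsMeagre (B ∩ ⋃₀ S) := by
  classical
  -- the collection of pairwise disjoint families of nonempty open sets,
  -- each contained in some member of `S`
  set P : Set (Set X) := {D | IsOpen D ∧ D.Nonempty ∧ ∃ V ∈ S, D ⊆ V} with hP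
  set C : Set (Set (Set X)) := {F | F ⊆ P ∧ F.Pairwise (Disjoint · ·)} with hC
  obtain ⟨𝒟, h𝒟max⟩ : ∃ m, Maximal (· ∈ C) m := by
    apply zorn_subset
    intro c hc hchain
    refine ⟨⋃₀ c, ⟨?_, ?_⟩, fun s hs => subset_sUnion_of_mem hs⟩
    · intro D hD
      obtain ⟨F, hF, hDF⟩ := hD
      exact (hc hF).1 hDF
    · intro D₁ hD₁ D₂ hD₂ hne
      obtain ⟨F₁, hF₁, h1⟩ := hD₁
      obtain ⟨F₂, hF₂, h2⟩ := hD₂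
      rcases hchain.total hF₁ hF₂ with h | h
      · exact (hc hF₂).2 (h h1) h2 hne
      · exact (hc hF₁).2 h1 (h h2) hne
  have h𝒟 : 𝒟 ∈ C := h𝒟max.prop
  -- density of the union of the maximal family
  have hdense : ⋃₀ S ⊆ closure (⋃₀ 𝒟) := by
    intro x hx
    obtain ⟨V, hV, hxV⟩ := hx
    by_contra hxc
    set D' : Set X := V \ closure (⋃₀ 𝒟) with hD'
    have hD'open : IsOpen D' := (ho V hV).sdiff isClosed_closure
    have hD'ne : D'.Nonempty := ⟨x, hxV, hxc⟩
    have hD'P : D' ∈ P := ⟨hD'open, hD'ne, V, hV, diff_subset⟩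
    have hD'disj : ∀ D ∈ 𝒟, Disjoint D' D := by
      intro D hD
      refine disjoint_left.mpr fun y hy hyD => hy.2 ?_
      exact subset_closure (⟨D, hD, hyD⟩ : y ∈ ⋃₀ 𝒟)
    have hD'notin : D' ∉ 𝒟 := by
      intro hmem
      obtain ⟨y, hy⟩ := hD'ne
      exact hy.2 (subset_closure ⟨D', hmem, hy⟩)
    have hins : insert D' 𝒟 ∈ C := by
      constructor
      · exact insert_subset hD'P h𝒟.1
      · rw [pairwise_insert]
        refine ⟨h𝒟.2, fun D hD _ => ⟨hD'disj D hD, (hD'disj D hD).symm⟩⟩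
    have := h𝒟max.2 hins (subset_insert _ _)
    exact hD'notin (this (mem_insert _ _))
  -- choose covers by nowhere dense sets
  have hmem : ∀ D : 𝒟, ∃ f : ℕ → Set X, (∀ n, IsNowhereDense (f n)) ∧
      B ∩ (D : Set X) ⊆ ⋃ n, f n := by
    rintro ⟨D, hD⟩
    obtain ⟨hDo, hDne, V, hV, hDV⟩ := h𝒟.1 hD
    have : IsMeagre (B ∩ D) := (hm V hV).mono (inter_subset_inter_right _ hDV)
    obtain ⟨T, hTnd, hTc, hTsub⟩ := isMeagre_iff_countable_union_isNowhereDense.mp this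
    have hT'c : (insert (∅ : Set X) T).Countable := hTc.insert _
    obtain ⟨f, hf⟩ := hT'c.exists_eq_range (insert_nonempty _ _)
    refine ⟨f, fun n => ?_, fun x hx => ?_⟩
    · have : f n ∈ insert (∅ : Set X) T := hf ▸ mem_range_self n
      rcases this with h | h
      · rw [h]; exact isNowhereDense_empty
      · exact hTnd _ h
    · obtain ⟨t, ht, hxt⟩ := hTsub hx
      have : t ∈ insert (∅ : Set X) T := mem_insert_of_mem _ ht
      rw [hf] at this
      obtain ⟨n, hn⟩ := this
      exact mem_iUnion.mpr ⟨n, hn ▸ hxt⟩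
  choose f hfnd hfsub using hmem
  -- the pieces, combined over the disjoint family, are nowhere dense
  set T : ℕ → Set X := fun n => ⋃ D : 𝒟, (f D n ∩ (D : Set X)) with hT
  have hTnd : ∀ n, IsNowhereDense (T n) := by
    intro n
    rw [IsNowhereDense, ← subset_empty_iff]
    intro x hx
    exfalso
    set O : Set X := interior (closure (T n)) with hO
    have hOopen : IsOpen O := isOpen_interior
    have hOne : O.Nonempty := ⟨x, hx⟩
    have hTsub𝒟 : T n ⊆ ⋃₀ 𝒟 := by
      rintro y hy
      obtain ⟨D, hyD⟩ := mem_iUnion.mp hy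
      exact ⟨D, D.2, hyD.2⟩
    have hOsub : O ⊆ closure (⋃₀ 𝒟) :=
      by
      have : closure (T n) ⊆ closure (⋃₀ 𝒟) := closure_minimal (hTsub𝒟.trans subset_closure) isClosed_closure
      exact interior_subset.trans this
    obtain ⟨y, hyO, hy𝒟⟩ := myOpen_meets hOopen hOne hOsub
    obtain ⟨D₀, hD₀, hyD₀⟩ := hy𝒟
    -- O ∩ D₀ is a nonempty open subset of closure (f ⟨D₀,_⟩ n ∩ D₀)
    have hsub : O ∩ D₀ ⊆ closure (f ⟨D₀, hD₀⟩ n ∩ D₀) := by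
      intro z hz
      rw [mem_closure_iff]
      intro W hW hzW
      have hz' : z ∈ closure (T n) := interior_subset hz.1
      have hopen : IsOpen (W ∩ O ∩ D₀) :=
        (hW.inter hOopen).inter (h𝒟.1 hD₀).1
      have hzmem : z ∈ W ∩ O ∩ D₀ := ⟨⟨hzW, hz.1⟩, hz.2⟩
      obtain ⟨w, hwW, hwT⟩ := mem_closure_iff.mp hz' _ hopen hzmem
      obtain ⟨D, hwD⟩ := mem_iUnion.mp hwT
      have hDD₀ : (D : Set X) = D₀ := by
        by_contra hne
        exact (h𝒟.2 D.2 hD₀ hne).le_bot ⟨hwD.2, hwW.2⟩ |>.elim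
      have hDeq : D = (⟨D₀, hD₀⟩ : 𝒟) := Subtype.ext hDD₀
      refine ⟨w, hwW.1.1, ?_, hwW.2⟩
      rw [← hDeq]; exact hwD.1
    have hndfD : IsNowhereDense (f ⟨D₀, hD₀⟩ n ∩ D₀) :=
      myNdMono (hfnd _ n) inter_subset_left
    have : O ∩ D₀ ⊆ interior (closure (f ⟨D₀, hD₀⟩ n ∩ D₀)) :=
      interior_maximal hsub (hOopen.inter (h𝒟.1 hD₀).1)
    rw [hndfD] at this
    exact absurd (this ⟨hyO, hyD₀⟩) (notMem_empty y)
  -- conclude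
  have hcover : B ∩ ⋃₀ S ⊆ (⋃ n, T n) ∪ (closure (⋃₀ 𝒟) \ ⋃₀ 𝒟) := by
    rintro x ⟨hxB, hxS⟩
    by_cases hx𝒟 : x ∈ ⋃₀ 𝒟
    · obtain ⟨D, hD, hxD⟩ := hx𝒟
      have : x ∈ ⋃ n, f ⟨D, hD⟩ n := hfsub ⟨D, hD⟩ ⟨hxB, hxD⟩
      obtain ⟨n, hn⟩ := mem_iUnion.mp this
      exact Or.inl (mem_iUnion.mpr ⟨n, mem_iUnion.mpr ⟨⟨D, hD⟩, hn, hxD⟩⟩)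
    · exact Or.inr ⟨hdense hxS, hx𝒟⟩
  have h𝒟open : IsOpen (⋃₀ 𝒟) := isOpen_sUnion fun D hD => (h𝒟.1 hD).1
  have hmeag : IsMeagre ((⋃ n, T n) ∪ (closure (⋃₀ 𝒟) \ ⋃₀ 𝒟)) :=
    myMeagreUnion (isMeagre_iUnion fun n => myNdMeagre (hTnd n))
      (myNdMeagre (myNd_closure_diff h𝒟open))
  exact hmeag.mono hcover

/-- Let `X` be a Baire space and `A ⊆ X`. Then `A` is Baire
measurable (differs from an open set by a meager set) iff for every nonempty
open `U ⊆ X`, either `A` is comeager in `U` (i.e. `U \ A` is meager) or there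
is a nonempty open `V ⊆ U` in which `A` is meager (i.e. `A ∩ V` is meager). -/
theorem statement5 {X : Type*} [TopologicalSpace X] [BaireSpace X] (A : Set X) :
    (∃ U : Set X, IsOpen U ∧ IsMeagre (symmDiff A U)) ↔
      ∀ U : Set X, IsOpen U → U.Nonempty →
        IsMeagre (U \ A) ∨
          ∃ V : Set X, V ⊆ U ∧ IsOpen V ∧ V.Nonempty ∧ IsMeagre (A ∩ V) := by
  constructor
  · rintro ⟨U, hUopen, hUm⟩ W hWopen hWne
    have hsymm : symmDiff A U = (A \ U) ∪ (U \ A) := Set.symmDiff_def A U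
    by_cases hcase : (W \ closure U).Nonempty
    · refine Or.inr ⟨W \ closure U, diff_subset, hWopen.sdiff isClosed_closure, hcase, ?_⟩
      refine hUm.mono fun x hx => ?_
      rw [hsymm]
      exact Or.inl ⟨hx.1, fun hxU => hx.2.2 (subset_closure hxU)⟩
    · left
      rw [not_nonempty_iff_eq_empty, diff_eq_empty] at hcase
      have hsub : W \ A ⊆ symmDiff A U ∪ (closure U \ U) := by
        intro x hx
        by_cases hxU : x ∈ U
        · exact Or.inl (by rw [hsymm]; exact Or.inr ⟨hxU, hx.2⟩)
        · exact Or.inr ⟨hcase hx.1, hxU⟩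
      exact (myMeagreUnion hUm (myNdMeagre (myNd_closure_diff hUopen))).mono hsub
  · intro h
    set 𝒮 : Set (Set X) := {V | IsOpen V ∧ IsMeagre (V \ A)} with h𝒮
    set U : Set X := ⋃₀ 𝒮 with hU
    have hUopen : IsOpen U := isOpen_sUnion fun V hV => hV.1
    refine ⟨U, hUopen, ?_⟩
    -- U \ A is meager by Banach category
    have hUA : IsMeagre (U \ A) := by
      have := myBanach_category Aᶜ 𝒮 (fun V hV => hV.1)
        (fun V hV => hV.2.mono (by rw [diff_eq, inter_comm]))
      refine this.mono ?_
      rw [diff_eq, inter_comm]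
    -- A \ U is meager
    have hAU : IsMeagre (A \ U) := by
      set O : Set X := (closure U)ᶜ with hO
      set 𝒮' : Set (Set X) := {V | IsOpen V ∧ V ⊆ O ∧ IsMeagre (A ∩ V)} with h𝒮'
      set G : Set X := ⋃₀ 𝒮' with hG
      have hGopen : IsOpen G := isOpen_sUnion fun V hV => hV.1
      have hAG : IsMeagre (A ∩ G) :=
        myBanach_category A 𝒮' (fun V hV => hV.1) (fun V hV => hV.2.2)
      have hOG : O ⊆ closure G := by
        by_contra hc
        rw [not_subset] at hc
        obtain ⟨x, hxO, hxG⟩ := hc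
        set W : Set X := O \ closure G with hW
        have hWopen : IsOpen W := (isClosed_closure.isOpen_compl).sdiff isClosed_closure
        have hWne : W.Nonempty := ⟨x, hxO, hxG⟩
        rcases h W hWopen hWne with hmg | ⟨V, hVW, hVopen, hVne, hVm⟩
        · have hWU : W ⊆ U := subset_sUnion_of_mem ⟨hWopen, hmg⟩
          obtain ⟨y, hy⟩ := hWne
          exact hy.1 (subset_closure (hWU hy))
        · have hVG : V ⊆ G := subset_sUnion_of_mem
            ⟨hVopen, hVW.trans diff_subset, hVm⟩
          obtain ⟨y, hy⟩ := hVne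
          exact (hVW hy).2 (subset_closure (hVG hy))
      have hsub : A \ U ⊆ (A ∩ G) ∪ (closure G \ G) ∪ (closure U \ U) := by
        intro x hx
        by_cases hxc : x ∈ closure U
        · exact Or.inr ⟨hxc, hx.2⟩
        · have hxO : x ∈ O := hxc
          by_cases hxG : x ∈ G
          · exact Or.inl (Or.inl ⟨hx.1, hxG⟩)
          · exact Or.inl (Or.inr ⟨hOG hxO, hxG⟩)
      exact (myMeagreUnion (myMeagreUnion hAG (myNdMeagre (myNd_closure_diff hGopen)))
        (myNdMeagre (myNd_closure_diff hUopen))).mono hsub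
    have : symmDiff A U = (A \ U) ∪ (U \ A) := Set.symmDiff_def A U
    rw [this]
    exact myMeagreUnion hAU hUA
end

section
/- Let κ be a cardinal, let X be a topological space in which the intersection of any κ-many comeager sets is comeager, let Y be a topological space admitting a π-basis of cardinality at most κ, and let A ⊆ X × Y be comeager in the product topology. Then the set {x ∈ X : A_x is comeager in Y} is comeager in X, where A_x = {y ∈ Y : (x, y) ∈ A}. -/
open MeasureTheory Topology Cardinal Set

universe u

lemma aux_isMeagre_of_nowhereDense {Z : Type*} [TopologicalSpace Z] {s : Set Z}
    (h : IsNowhereDense s) : IsMeagre s := by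
  rw [isMeagre_iff_countable_union_isNowhereDense]
  exact ⟨{s}, by simpa using h, countable_singleton s, by simp⟩

/-- **generalized Kuratowski–Ulam.** Let `κ` be a cardinal, let
`X` be a topological space in which the intersection of any `κ`-many comeager
sets is comeager, let `Y` be a topological space admitting a π-basis of
cardinality at most `κ` (a family of nonempty open sets such that every
nonempty open set contains a member of the family), and let `A ⊆ X × Y` be
comeager in the product topology. Then `{x | A_x is comeager in Y}` is
comeager in `X`. -/
theorem statement11 (κ : Cardinal.{u}) {X Y : Type*}
    [TopologicalSpace X] [TopologicalSpace Y]
    (hX : ∀ (ι : Type u) (s : ι → Set X), #ι ≤ κ →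
      (∀ i, IsMeagre (s i)ᶜ) → IsMeagre (⋂ i, s i)ᶜ)
    (hY : ∃ (ι : Type u) (b : ι → Set Y), #ι ≤ κ ∧
      (∀ i, IsOpen (b i) ∧ (b i).Nonempty) ∧
      ∀ V : Set Y, IsOpen V → V.Nonempty → ∃ i, b i ⊆ V)
    (A : Set (X × Y)) (hA : IsMeagre Aᶜ) :
    IsMeagre {x : X | IsMeagre {y : Y | (x, y) ∈ A}ᶜ}ᶜ := by
  obtain ⟨ι, b, hκ, hb, hbasis⟩ := hY
  -- from hA, get a countable family of dense open sets whose intersection is ⊆ A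
  rw [IsMeagre, compl_compl, mem_residual_iff] at hA
  obtain ⟨S, hSo, hSd, hSc, hSsub⟩ := hA
  have hSc' : (insert Set.univ S).Countable := hSc.insert _
  obtain ⟨f, hf⟩ := hSc'.exists_eq_range (insert_nonempty _ _)
  have hfo : ∀ n, IsOpen (f n) := by
    intro n
    have : f n ∈ insert Set.univ S := hf ▸ mem_range_self n
    rcases this with h | h
    · rw [h]; exact isOpen_univ
    · exact hSo _ h
  have hfd : ∀ n, Dense (f n) := by
    intro n
    have : f n ∈ insert Set.univ S := hf ▸ mem_range_self n
    rcases this with h | h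
    · rw [h]; exact dense_univ
    · exact hSd _ h
  have hfsub : (⋂ n, f n) ⊆ A := by
    refine Subset.trans ?_ hSsub
    intro x hx t ht
    have : t ∈ insert Set.univ S := mem_insert_of_mem _ ht
    rw [hf] at this
    obtain ⟨n, rfl⟩ := this
    exact mem_iInter.mp hx n
  -- witness sets
  set W : ℕ → ι → Set X := fun n i => {x | ∃ y ∈ b i, (x, y) ∈ f n} with hW
  have hWo : ∀ n i, IsOpen (W n i) := by
    intro n i
    rw [isOpen_iff_forall_mem_open]
    rintro x ⟨y, hy, hxy⟩
    obtain ⟨U, V, hU, hV, hxU, hyV, hUV⟩ := isOpen_prod_iff.mp (hfo n) x y hxy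
    exact ⟨U, fun x' hx' => ⟨y, hy, hUV ⟨hx', hyV⟩⟩, hU, hxU⟩
  have hWd : ∀ n i, Dense (W n i) := by
    intro n i
    rw [dense_iff_inter_open]
    intro U hU hUne
    have hprod : (U ×ˢ b i).Nonempty := hUne.prod (hb i).2
    obtain ⟨⟨x, y⟩, hmem, hin⟩ := (hfd n).exists_mem_open (hU.prod (hb i).1) hprod
    exact ⟨x, hin.1, y, hin.2, hmem⟩
  -- each ⋂ i, W n i is comeager by hX
  have hGn : ∀ n, IsMeagre (⋂ i, W n i)ᶜ := by
    intro n
    refine hX ι (W n) hκ fun i => ?_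
    have : IsNowhereDense (W n i)ᶜ := by
      rw [(isClosed_compl_iff.mpr (hWo n i)).isNowhereDense_iff,
        interior_eq_empty_iff_dense_compl, compl_compl]
      exact hWd n i
    exact aux_isMeagre_of_nowhereDense this
  -- the countable intersection over n is comeager
  have hG : IsMeagre (⋂ n, ⋂ i, W n i)ᶜ := by
    rw [IsMeagre, compl_compl]
    exact countable_iInter_mem.mpr fun n => by
      have := hGn n; rwa [IsMeagre, compl_compl] at this
  -- and it is contained in the target set
  refine hG.mono (compl_subset_compl.mpr ?_)
  intro x hx
  have hx' : ∀ n i, x ∈ W n i := fun n i =>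
    mem_iInter.mp (mem_iInter.mp hx n) i
  -- A_xᶜ ⊆ ⋃ n, (f n)ᶜ_x, each nowhere dense
  have key : {y : Y | (x, y) ∈ A}ᶜ ⊆ ⋃ n, {y : Y | (x, y) ∈ f n}ᶜ := by
    intro y hy
    simp only [mem_iUnion, mem_compl_iff, mem_setOf_eq]
    by_contra h
    push_neg at h
    exact hy (hfsub (mem_iInter.mpr h))
  refine IsMeagre.mono key (isMeagre_iUnion fun n => ?_)
  refine aux_isMeagre_of_nowhereDense ?_
  rw [IsClosed.isNowhereDense_iff]
  · rw [eq_empty_iff_forall_notMem]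
    intro y hy
    have hVo : IsOpen (interior {y : Y | (x, y) ∈ f n}ᶜ) := isOpen_interior
    obtain ⟨i, hi⟩ := hbasis _ hVo ⟨y, hy⟩
    obtain ⟨y', hy', hxy'⟩ := hx' n i
    exact (interior_subset (hi hy')) hxy'
  · exact isClosed_compl_iff.mpr ((hfo n).preimage (Continuous.prodMk_right x))
end
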